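/- Let q, n ≥ 1, with f and g as defined (f : {x,y}* → ZMod q counting y's after the (n+1)-st occurrence of x from the right, g(i₁,…,iₙ) = x y^{i₁} ⋯ x y^{iₙ}). For κ = (i₁,…,iₙ) ∈ (Fin q)^n, any k ∈ {1,…,n}, and any r ∈ {0,…,q−1}, one has f(g(κ) ++ x^k y^r) ≡ iₖ + i_{k+1} + ⋯ + iₙ + r (mod q). -/

import Mathlib

/-!
In `g κ ++ x^(k+1) y^r` (with `k` counted from `0`) the `x`'s of the last `n - k` blocks of `g κ`
together with the `k + 1` trailing ones are exactly `n`, so the `(n+1)`-st `x` from the right is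
the one opening the block `y^{κ k}`. What follows it is `y^{κ k}`, the later blocks and
`x^(k+1) y^r`, whose `y`'s number `κ k + ⋯ + κ (n-1) + r`.
-/

/-- The two-letter alphabet `{x, y}`. -/
inductive XY : Type
  | x : XY
  | y : XY
deriving DecidableEq

/-- The longest suffix of `w` containing at most `n` occurrences of `x`
(equivalently, the part of `w` strictly after the `(n+1)`-st occurrence of `x`
from the right, or `w` itself if `w` has at most `n` occurrences of `x`). -/
def goodSuffix (n : ℕ) : List XY → List XY
  | [] => []
  | a :: w => if (a :: w).count XY.x ≤ n then a :: w else goodSuffix n w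

/-- `f w` is the number of `y`'s in `w` after the `(n+1)`-st occurrence of `x`
from the right (all `y`'s if there are at most `n` occurrences of `x`), mod `q`. -/
def f (q n : ℕ) (w : List XY) : ZMod q := ((goodSuffix n w).count XY.y : ZMod q)

/-- `g (i₁, …, iₙ) = x y^{i₁} x y^{i₂} ⋯ x y^{iₙ}`. -/
def g (q n : ℕ) (κ : Fin n → Fin q) : List XY :=
  (List.ofFn fun j : Fin n => XY.x :: List.replicate (κ j : ℕ) XY.y).flatten

def blockWord (l : List ℕ) : List XY :=
  (l.map fun i => XY.x :: List.replicate i XY.y).flatten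

@[simp]
lemma blockWord_cons (i : ℕ) (l : List ℕ) :
    blockWord (i :: l) = XY.x :: (List.replicate i XY.y ++ blockWord l) := rfl

@[simp]
lemma blockWord_append (l₁ l₂ : List ℕ) :
    blockWord (l₁ ++ l₂) = blockWord l₁ ++ blockWord l₂ := by
  simp [blockWord]

@[simp]
lemma count_x_replicate_y (m : ℕ) : (List.replicate m XY.y).count XY.x = 0 := by
  simp [List.count_replicate]

@[simp]
lemma count_y_replicate_x (m : ℕ) : (List.replicate m XY.x).count XY.y = 0 := by
  simp [List.count_replicate]

@[simp]
lemma count_x_blockWord (l : List ℕ) : (blockWord l).count XY.x = l.length := by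
  induction l with
  | nil => rfl
  | cons i l ih => simp [ih]

@[simp]
lemma count_y_blockWord (l : List ℕ) : (blockWord l).count XY.y = l.sum := by
  induction l with
  | nil => rfl
  | cons i l ih => simp [ih]

lemma g_eq_blockWord (q n : ℕ) (κ : Fin n → Fin q) :
    g q n κ = blockWord (List.ofFn fun j => (κ j : ℕ)) := by
  simp [g, blockWord, List.map_ofFn, Function.comp_def]

lemma goodSuffix_of_count_le {n : ℕ} {v : List XY} (h : v.count XY.x ≤ n) :
    goodSuffix n v = v := by
  cases v with
  | nil => rfl
  | cons a w => simp [goodSuffix, h]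

lemma goodSuffix_append_of_lt_count {n : ℕ} (u : List XY) {v : List XY}
    (h : n < v.count XY.x) : goodSuffix n (u ++ v) = goodSuffix n v := by
  induction u with
  | nil => rfl
  | cons a u ih =>
    have : ¬ (a :: (u ++ v)).count XY.x ≤ n := by
      simp only [List.count_cons, List.count_append]; omega
    rw [List.cons_append, goodSuffix, if_neg this, ih]

lemma goodSuffix_append_x_cons {n : ℕ} (u : List XY) {v : List XY} (h : v.count XY.x = n) :
    goodSuffix n (u ++ XY.x :: v) = v := by
  have hxv : (XY.x :: v).count XY.x = n + 1 := by simp [h]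
  rw [goodSuffix_append_of_lt_count u (by omega), goodSuffix, if_neg (by omega),
    goodSuffix_of_count_le h.le]

lemma count_y_goodSuffix_blockWord_append {n : ℕ} (a b : List ℕ) (i m r : ℕ)
    (h : b.length + m = n) :
    (goodSuffix n (blockWord (a ++ i :: b) ++ List.replicate m XY.x ++
      List.replicate r XY.y)).count XY.y = i + b.sum + r := by
  have hsplit : blockWord (a ++ i :: b) ++ List.replicate m XY.x ++ List.replicate r XY.y =
      blockWord a ++ XY.x ::
        (List.replicate i XY.y ++ blockWord b ++ List.replicate m XY.x ++ List.replicate r XY.y) := by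
    simp
  rw [hsplit, goodSuffix_append_x_cons _ (by simpa using h)]
  simp [add_assoc]

lemma List.sum_drop_ofFn {M : Type*} [AddCommMonoid M] {n : ℕ} (v : Fin n → M) (k : Fin n) :
    ((List.ofFn v).drop k).sum = ∑ j ∈ Finset.Ici k, v j := by
  induction n with
  | zero => exact k.elim0
  | succ n ih =>
    cases k using Fin.cases with
    | zero => simp [List.sum_ofFn, Fin.sum_univ_succ]
    | succ k => simp [List.ofFn_succ, Fin.sum_Ici_succ, ih]

/-- `k : Fin n` is the paper's `k ∈ {1, …, n}` shifted down by one, so the `x`-block has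
length `k + 1`. -/
theorem f_g_append_pump_general (q n : ℕ)
    (κ : Fin n → Fin q) (k : Fin n) (r : Fin q) :
    f q n (g q n κ ++ List.replicate ((k : ℕ) + 1) XY.x ++ List.replicate (r : ℕ) XY.y) =
      (∑ j ∈ Finset.Ici k, ((κ j : ℕ) : ZMod q)) + ((r : ℕ) : ZMod q) := by
  rw [f, g_eq_blockWord]
  set l := List.ofFn fun j => (κ j : ℕ)
  have hdrop : l.drop k = (κ k : ℕ) :: l.drop (k + 1) := by
    rw [List.drop_eq_getElem_cons (by simp [l])]
    simp [l]
  have hsum : ∑ j ∈ Finset.Ici k, ((κ j : ℕ) : ZMod q) = ((l.drop k).sum : ℕ) := by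
    rw [← List.sum_drop_ofFn]
    simp [l, Nat.cast_list_sum, List.map_drop, List.map_ofFn, Function.comp_def]
  rw [← List.take_append_drop k l, hdrop,
    count_y_goodSuffix_blockWord_append _ _ _ _ _ (by simp [l]), hsum, hdrop,
    List.sum_cons]
  push_cast
  ring

/-- `f (g κ ++ xᵏ yʳ) ≡ i_k + i_{k+1} + ⋯ + i_n + r (mod q)`, where `k` ranges
over `{1, …, n}` (here represented by `k : Fin n`, the `x`-block having length
`k + 1`) and `r ∈ {0, …, q-1}`. -/
theorem f_g_append_pump (q n : ℕ) (hq : 1 ≤ q) (hn : 1 ≤ n)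
    (κ : Fin n → Fin q) (k : Fin n) (r : Fin q) :
    f q n (g q n κ ++ List.replicate ((k : ℕ) + 1) XY.x ++ List.replicate (r : ℕ) XY.y) =
      (∑ j ∈ Finset.Ici k, ((κ j : ℕ) : ZMod q)) + ((r : ℕ) : ZMod q) :=
  f_g_append_pump_general q n κ k r
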